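/- arXiv:1910.07417 — 12 statements merged into one kernel-verified Lean document; each statement's English description precedes it below -/
import Mathlib

section
/- Fix a > 0 and c ≥ 0. Then ((1−γ)/γ)·(1 + a c/(1−γ))^γ tends to −e^{−a c} as γ → +∞ (note that for γ > 1 + a c the base 1 + a c/(1−γ) = (1 − γ + a c)/(1 − γ) is positive, so the real power is well defined eventually along the filter atTop). -/
/-!
Substituting `u = γ - 1`, the power becomes `(1 - a c / u) ^ (u + 1)`, which tends to `e^{-a c}`
by the classical limit `(1 + x / u) ^ u → e^x` (the extra factor `1 - a c / u` tends to `1`),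
while the prefactor `(1 - γ) / γ` tends to `-1`.
-/

open Filter Real Topology

theorem tendsto_one_add_div_rpow_add_one_exp (x : ℝ) :
    Tendsto (fun u : ℝ => (1 + x / u) ^ (u + 1)) atTop (𝓝 (exp x)) := by
  have hbase : Tendsto (fun u : ℝ => 1 + x / u) atTop (𝓝 1) := by
    simpa using (tendsto_const_nhds.div_atTop tendsto_id).const_add (1 : ℝ)
  have hprod := (tendsto_one_add_div_rpow_exp x).mul hbase
  rw [mul_one] at hprod
  refine hprod.congr' ?_
  filter_upwards [(tendsto_order.1 hbase).1 0 one_pos] with u hu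
  rw [rpow_add_one hu.ne']

theorem tendsto_one_add_div_one_sub_rpow_exp (x : ℝ) :
    Tendsto (fun γ : ℝ => (1 + x / (1 - γ)) ^ γ) atTop (𝓝 (exp (-x))) := by
  refine ((tendsto_one_add_div_rpow_add_one_exp (-x)).comp
    (tendsto_atTop_add_const_right _ (-1) tendsto_id)).congr fun γ => ?_
  rw [Function.comp_apply, id, ← sub_eq_add_neg, sub_add_cancel, ← neg_sub γ 1, div_neg, neg_div]

theorem tendsto_one_sub_div_self_atTop : Tendsto (fun γ : ℝ => (1 - γ) / γ) atTop (𝓝 (-1)) := by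
  have h : Tendsto (fun γ : ℝ => γ⁻¹ - 1) atTop (𝓝 (0 - 1)) :=
    tendsto_inv_atTop_zero.sub_const 1
  rw [zero_sub] at h
  refine h.congr' ?_
  filter_upwards [eventually_ne_atTop 0] with γ hγ
  field_simp

theorem stmt_3_general (a c : ℝ) :
    Filter.Tendsto (fun γ : ℝ => ((1 - γ)/γ) * (1 + a * c/(1 - γ)) ^ γ)
      Filter.atTop (nhds (-Real.exp (-(a * c)))) := by
  simpa only [neg_one_mul] using
    tendsto_one_sub_div_self_atTop.mul (tendsto_one_add_div_one_sub_rpow_exp (a * c))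

/-- For fixed `a > 0` and `c ≥ 0`,
`((1−γ)/γ)·(1 + a c/(1−γ))^γ → −e^{−a c}` as `γ → +∞`. -/
theorem stmt_3 (a c : ℝ) (ha : 0 < a) (hc : 0 ≤ c) :
    Filter.Tendsto (fun γ : ℝ => ((1 - γ)/γ) * (1 + a * c/(1 - γ)) ^ γ)
      Filter.atTop (nhds (-Real.exp (-(a * c)))) :=
  stmt_3_general a c
end

section
/- Let V : ℝ³ → ℝ solve the EXPn–HJB equation (with an arbitrary positive survival function Φ̄), and let ψ = ψ(h,t) : ℝ² → ℝ be a C² function satisfying the linear parabolic PDE ψ_t + (1/2)η²h²ψ_{hh} + (μ − δ)h ψ_h = 0 at every point. Then the function (l,h,t) ↦ V(l,h,t) + ψ(h,t) also solves the EXPn–HJB equation. -/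
/-- Partial derivative of `V(l,h,t)` in `l`. -/
noncomputable def pdl (V : ℝ → ℝ → ℝ → ℝ) (l h t : ℝ) : ℝ := deriv (fun x => V x h t) l
/-- Partial derivative of `V(l,h,t)` in `h`. -/
noncomputable def pdh (V : ℝ → ℝ → ℝ → ℝ) (l h t : ℝ) : ℝ := deriv (fun y => V l y t) h
/-- Partial derivative of `V(l,h,t)` in `t`. -/
noncomputable def pdt (V : ℝ → ℝ → ℝ → ℝ) (l h t : ℝ) : ℝ := deriv (fun s => V l h s) t
/-- Second partial derivative `V_{ll}`. -/
noncomputable def pdll (V : ℝ → ℝ → ℝ → ℝ) (l h t : ℝ) : ℝ := deriv (fun x => pdl V x h t) l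
/-- Second partial derivative `V_{hh}`. -/
noncomputable def pdhh (V : ℝ → ℝ → ℝ → ℝ) (l h t : ℝ) : ℝ := deriv (fun y => pdh V l y t) h
/-- Mixed partial derivative `V_{lh}`. -/
noncomputable def pdlh (V : ℝ → ℝ → ℝ → ℝ) (l h t : ℝ) : ℝ := deriv (fun y => pdl V l y t) h

/-- `V(l,h,t)` is a (C², `V_l > 0`, `V_{ll} < 0`) solution of the EXPn–HJB equation
with survival function `Φ`. -/
def SolvesEXPn (r σ η a α μ δ ρ : ℝ) (Φ : ℝ → ℝ) (V : ℝ → ℝ → ℝ → ℝ) : Prop :=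
  ContDiff ℝ 2 (fun p : ℝ × ℝ × ℝ => V p.1 p.2.1 p.2.2) ∧
  (∀ l h t : ℝ, 0 < pdl V l h t) ∧
  (∀ l h t : ℝ, pdll V l h t < 0) ∧
  (∀ l h t : ℝ,
    pdt V l h t + (1/2) * η^2 * h^2 * pdhh V l h t + (r * l + δ * h) * pdl V l h t
      + (μ - δ) * h * pdh V l h t
      - ((α - r)^2 * (pdl V l h t)^2
          + 2 * (α - r) * η * ρ * h * pdl V l h t * pdlh V l h t
          + η^2 * ρ^2 * σ^2 * h^2 * (pdlh V l h t)^2) / (2 * σ^2 * pdll V l h t)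
      + (1/a) * pdl V l h t * Real.log (pdl V l h t)
      - (1/a) * (1 + Real.log (Φ t)) * pdl V l h t
      - (Real.log a / a) * pdl V l h t = 0)

/-!
The EXPn–HJB operator sees `V` only through `V_l`, `V_ll`, `V_lh`, which do not change when a
function `ψ(h,t)` is added, and through the linear part `V_t + ½η²h²V_hh + (μ−δ)hV_h`, to which
adding `ψ` contributes exactly the left-hand side of the linear PDE for `ψ`, namely zero.
-/

section AddFunOfHT

variable {V : ℝ → ℝ → ℝ → ℝ} {ψ : ℝ → ℝ → ℝ}

theorem pdl_add_fun_ht : pdl (fun l h t => V l h t + ψ h t) = pdl V := by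
  ext l h t
  exact deriv_add_const _

theorem pdll_add_fun_ht : pdll (fun l h t => V l h t + ψ h t) = pdll V := by
  ext l h t
  simp only [pdll, pdl_add_fun_ht]

theorem pdlh_add_fun_ht : pdlh (fun l h t => V l h t + ψ h t) = pdlh V := by
  ext l h t
  simp only [pdlh, pdl_add_fun_ht]

theorem pdh_add_fun_ht {l h t : ℝ} (hV : DifferentiableAt ℝ (fun y => V l y t) h)
    (hψ : DifferentiableAt ℝ (fun y => ψ y t) h) :
    pdh (fun l h t => V l h t + ψ h t) l h t = pdh V l h t + deriv (fun y => ψ y t) h :=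
  deriv_add hV hψ

theorem pdt_add_fun_ht {l h t : ℝ} (hV : DifferentiableAt ℝ (fun s => V l h s) t)
    (hψ : DifferentiableAt ℝ (fun s => ψ h s) t) :
    pdt (fun l h t => V l h t + ψ h t) l h t = pdt V l h t + deriv (fun s => ψ h s) t :=
  deriv_add hV hψ

theorem pdhh_add_fun_ht {l h t : ℝ} (hV : ContDiff ℝ 2 (fun y => V l y t))
    (hψ : ContDiff ℝ 2 (fun y => ψ y t)) :
    pdhh (fun l h t => V l h t + ψ h t) l h t
      = pdhh V l h t + deriv (fun x => deriv (fun y => ψ y t) x) h := by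
  have hpdh : (fun y => pdh (fun l h t => V l h t + ψ h t) l y t)
      = fun y => pdh V l y t + deriv (fun x => ψ x t) y := by
    ext y
    exact pdh_add_fun_ht (hV.differentiable two_ne_zero y) (hψ.differentiable two_ne_zero y)
  simp only [pdhh, hpdh]
  exact deriv_add (hV.differentiable_deriv_two h) (hψ.differentiable_deriv_two h)

end AddFunOfHT

theorem stmt_7_general (r σ η a α μ δ ρ : ℝ)
    (Φ : ℝ → ℝ)
    (V : ℝ → ℝ → ℝ → ℝ) (hV : SolvesEXPn r σ η a α μ δ ρ Φ V)
    (ψ : ℝ → ℝ → ℝ) (hψC : ContDiff ℝ 2 (fun p : ℝ × ℝ => ψ p.1 p.2))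
    (hψ : ∀ h t : ℝ,
      deriv (fun s => ψ h s) t
        + (1/2) * η^2 * h^2 * deriv (fun x => deriv (fun y => ψ y t) x) h
        + (μ - δ) * h * deriv (fun x => ψ x t) h = 0) :
    SolvesEXPn r σ η a α μ δ ρ Φ (fun l h t => V l h t + ψ h t) := by
  obtain ⟨hVC, hpos, hneg, hHJB⟩ := hV
  have hVh (l t : ℝ) : ContDiff ℝ 2 (fun y => V l y t) :=
    hVC.comp (contDiff_const.prodMk (contDiff_id.prodMk contDiff_const))
  have hVt (l h : ℝ) : ContDiff ℝ 2 (fun s => V l h s) :=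
    hVC.comp (contDiff_const.prodMk (contDiff_const.prodMk contDiff_id))
  have hψh (t : ℝ) : ContDiff ℝ 2 (fun y => ψ y t) := hψC.comp (contDiff_id.prodMk contDiff_const)
  have hψt (h : ℝ) : ContDiff ℝ 2 (fun s => ψ h s) := hψC.comp (contDiff_const.prodMk contDiff_id)
  refine ⟨hVC.add (hψC.comp contDiff_snd), ?_, ?_, fun l h t => ?_⟩
  · rwa [pdl_add_fun_ht]
  · rwa [pdll_add_fun_ht]
  · rw [pdl_add_fun_ht, pdll_add_fun_ht, pdlh_add_fun_ht,
      pdh_add_fun_ht ((hVh l t).differentiable two_ne_zero h) ((hψh t).differentiable two_ne_zero h),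
      pdt_add_fun_ht ((hVt l h).differentiable two_ne_zero t) ((hψt h).differentiable two_ne_zero t),
      pdhh_add_fun_ht (hVh l t) (hψh t)]
    linear_combination hHJB l h t + hψ h t

/-- Adding to a solution `V` of the EXPn–HJB equation any C²
solution `ψ(h,t)` of `ψ_t + (1/2)η²h²ψ_{hh} + (μ−δ)h ψ_h = 0` gives again a
solution of the EXPn–HJB equation. -/
theorem stmt_7 (r σ η a α μ δ ρ : ℝ) (hσ : 0 < σ) (ha : 0 < a)
    (Φ : ℝ → ℝ) (hΦ : ∀ t : ℝ, 0 < Φ t)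
    (V : ℝ → ℝ → ℝ → ℝ) (hV : SolvesEXPn r σ η a α μ δ ρ Φ V)
    (ψ : ℝ → ℝ → ℝ) (hψC : ContDiff ℝ 2 (fun p : ℝ × ℝ => ψ p.1 p.2))
    (hψ : ∀ h t : ℝ,
      deriv (fun s => ψ h s) t
        + (1/2) * η^2 * h^2 * deriv (fun x => deriv (fun y => ψ y t) x) h
        + (μ - δ) * h * deriv (fun x => ψ x t) h = 0) :
    SolvesEXPn r σ η a α μ δ ρ Φ (fun l h t => V l h t + ψ h t) :=
  stmt_7_general r σ η a α μ δ ρ Φ V hV ψ hψC hψ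
end

section
/- Let V : ℝ³ → ℝ solve the EXPn–HJB equation (with an arbitrary positive survival function Φ̄). Then for every d ∈ ℝ the function W(l,h,t) := V(l + d·e^{r t}, h, t) also solves the EXPn–HJB equation. (This is the symmetry generated by U₄ = e^{rt} ∂/∂l.) -/
/-!
Shifting `l` by `g t` leaves every `l`- and `h`-derivative of `V` unchanged and adds `g' t · V_l`
to `V_t`. In the equation this extra term combines with `r l V_l` into `r (l + g t) V_l` exactly
when `g' = r g`, i.e. for `g t = d e^{rt}`; so `W` satisfies at `(l, h, t)` the equation that `V`
satisfies at `(l + g t, h, t)`.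
-/

section ShiftInL

variable (V : ℝ → ℝ → ℝ → ℝ) (g : ℝ → ℝ)

theorem pdl_comp_add (l h t : ℝ) :
    pdl (fun l h t => V (l + g t) h t) l h t = pdl V (l + g t) h t :=
  deriv_comp_add_const (fun x => V x h t) (g t) l

theorem pdll_comp_add (l h t : ℝ) :
    pdll (fun l h t => V (l + g t) h t) l h t = pdll V (l + g t) h t := by
  simp only [pdll, pdl_comp_add]
  exact deriv_comp_add_const (fun x => pdl V x h t) (g t) l

theorem pdh_comp_add (l h t : ℝ) :
    pdh (fun l h t => V (l + g t) h t) l h t = pdh V (l + g t) h t := rfl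

theorem pdhh_comp_add (l h t : ℝ) :
    pdhh (fun l h t => V (l + g t) h t) l h t = pdhh V (l + g t) h t := rfl

theorem pdlh_comp_add (l h t : ℝ) :
    pdlh (fun l h t => V (l + g t) h t) l h t = pdlh V (l + g t) h t := by
  simp only [pdlh, pdl_comp_add]

end ShiftInL

section ChainRule

variable {V : ℝ → ℝ → ℝ → ℝ}

theorem hasDerivAt_comp_curve {x y z : ℝ → ℝ} {x' y' z' t : ℝ}
    (hV : DifferentiableAt ℝ (fun p : ℝ × ℝ × ℝ => V p.1 p.2.1 p.2.2) (x t, y t, z t))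
    (hx : HasDerivAt x x' t) (hy : HasDerivAt y y' t) (hz : HasDerivAt z z' t) :
    HasDerivAt (fun s => V (x s) (y s) (z s))
      (fderiv ℝ (fun p : ℝ × ℝ × ℝ => V p.1 p.2.1 p.2.2) (x t, y t, z t) (x', y', z')) t :=
  hV.hasFDerivAt.comp_hasDerivAt (f := fun s => (x s, y s, z s)) t (hx.prodMk (hy.prodMk hz))

theorem pdl_eq_fderiv {l h t : ℝ}
    (hV : DifferentiableAt ℝ (fun p : ℝ × ℝ × ℝ => V p.1 p.2.1 p.2.2) (l, h, t)) :
    pdl V l h t = fderiv ℝ (fun p : ℝ × ℝ × ℝ => V p.1 p.2.1 p.2.2) (l, h, t) (1, 0, 0) :=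
  (hasDerivAt_comp_curve hV (hasDerivAt_id' l) (hasDerivAt_const l h)
    (hasDerivAt_const l t)).deriv

theorem pdt_eq_fderiv {l h t : ℝ}
    (hV : DifferentiableAt ℝ (fun p : ℝ × ℝ × ℝ => V p.1 p.2.1 p.2.2) (l, h, t)) :
    pdt V l h t = fderiv ℝ (fun p : ℝ × ℝ × ℝ => V p.1 p.2.1 p.2.2) (l, h, t) (0, 0, 1) :=
  (hasDerivAt_comp_curve hV (hasDerivAt_const t l) (hasDerivAt_const t h)
    (hasDerivAt_id' t)).deriv

theorem pdt_comp_add {g : ℝ → ℝ} {g' l h t : ℝ}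
    (hV : DifferentiableAt ℝ (fun p : ℝ × ℝ × ℝ => V p.1 p.2.1 p.2.2) (l + g t, h, t))
    (hg : HasDerivAt g g' t) :
    pdt (fun l h t => V (l + g t) h t) l h t
      = pdt V (l + g t) h t + g' * pdl V (l + g t) h t := by
  have hcurve := hasDerivAt_comp_curve hV (hg.const_add l) (hasDerivAt_const t h)
    (hasDerivAt_id' t)
  have hdir : ((g', 0, 1) : ℝ × ℝ × ℝ) = g' • (1, 0, 0) + (0, 0, 1) := by simp
  rw [pdt, hcurve.deriv, hdir, map_add, map_smul, pdl_eq_fderiv hV, pdt_eq_fderiv hV,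
    smul_eq_mul, add_comm]

end ChainRule

theorem SolvesEXPn.comp_add {r σ η a α μ δ ρ : ℝ} {Φ : ℝ → ℝ} {V : ℝ → ℝ → ℝ → ℝ}
    {g : ℝ → ℝ} (hV : SolvesEXPn r σ η a α μ δ ρ Φ V) (hg : ContDiff ℝ 2 g)
    (hg' : ∀ t, HasDerivAt g (r * g t) t) :
    SolvesEXPn r σ η a α μ δ ρ Φ (fun l h t => V (l + g t) h t) := by
  obtain ⟨hC2, hpos, hneg, hHJB⟩ := hV
  have hdiff : Differentiable ℝ (fun p : ℝ × ℝ × ℝ => V p.1 p.2.1 p.2.2) :=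
    hC2.differentiable (by norm_num)
  refine ⟨?_, fun l h t => ?_, fun l h t => ?_, fun l h t => ?_⟩
  · have hshift : ContDiff ℝ 2 fun p : ℝ × ℝ × ℝ => (p.1 + g p.2.2, p.2.1, p.2.2) := by
      fun_prop
    exact hC2.comp hshift
  · rw [pdl_comp_add]
    exact hpos _ _ _
  · rw [pdll_comp_add]
    exact hneg _ _ _
  · rw [pdl_comp_add, pdll_comp_add, pdh_comp_add, pdhh_comp_add, pdlh_comp_add,
      pdt_comp_add (hdiff _) (hg' t)]
    linear_combination hHJB (l + g t) h t

theorem stmt_8_general (r σ η a α μ δ ρ : ℝ)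
    (Φ : ℝ → ℝ)
    (V : ℝ → ℝ → ℝ → ℝ) (hV : SolvesEXPn r σ η a α μ δ ρ Φ V) (d : ℝ) :
    SolvesEXPn r σ η a α μ δ ρ Φ (fun l h t => V (l + d * Real.exp (r * t)) h t) :=
  hV.comp_add (g := fun t => d * Real.exp (r * t)) (by fun_prop) fun t =>
    (((hasDerivAt_id' t).const_mul r).exp.const_mul d).congr_deriv (by ring)

/-- If `V` solves the EXPn–HJB equation then for every `d ∈ ℝ` the
shifted function `W(l,h,t) = V(l + d·e^{rt}, h, t)` also solves it (symmetry
generated by `U₄ = e^{rt} ∂/∂l`). -/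
theorem stmt_8 (r σ η a α μ δ ρ : ℝ) (hσ : 0 < σ) (ha : 0 < a)
    (Φ : ℝ → ℝ) (hΦ : ∀ t : ℝ, 0 < Φ t)
    (V : ℝ → ℝ → ℝ → ℝ) (hV : SolvesEXPn r σ η a α μ δ ρ Φ V) (d : ℝ) :
    SolvesEXPn r σ η a α μ δ ρ Φ (fun l h t => V (l + d * Real.exp (r * t)) h t) :=
  stmt_8_general r σ η a α μ δ ρ Φ V hV d
end

section
/- Let V : ℝ³ → ℝ solve the EXPn–HJB equation (with an arbitrary positive survival function Φ̄). Then for every ε ∈ ℝ the function W(l,h,t) := e^{−ε}·V(l − ε/(a r), h, t) also solves the EXPn–HJB equation (here r ≠ 0 is assumed). (This is the symmetry generated by U₁ = (1/(ar)) ∂/∂l − V ∂/∂V.) -/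
/-!
Scaling a solution by `k > 0` leaves every term of the equation homogeneous of degree one
except `V_l ln V_l / a`, which contributes `(ln k / a) V_l`; translating by `c` in `l` changes
only the drift term `r l V_l`, by `r c V_l`. The two contributions cancel when
`r c + ln k / a = 0`, and `k = e^{-ε}`, `c = ε / (a r)` is such a pair.
-/

def scaleShift (k c : ℝ) (V : ℝ → ℝ → ℝ → ℝ) : ℝ → ℝ → ℝ → ℝ :=
  fun l h t => k * V (l - c) h t

section scaleShift

variable (k c : ℝ) (V : ℝ → ℝ → ℝ → ℝ) (l h t : ℝ)

theorem pdl_scaleShift : pdl (scaleShift k c V) l h t = k * pdl V (l - c) h t := by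
  simp only [pdl, scaleShift]
  rw [deriv_const_mul_field, deriv_comp_sub_const (fun x => V x h t)]

theorem pdh_scaleShift : pdh (scaleShift k c V) l h t = k * pdh V (l - c) h t :=
  deriv_const_mul_field _

theorem pdt_scaleShift : pdt (scaleShift k c V) l h t = k * pdt V (l - c) h t :=
  deriv_const_mul_field _

theorem pdl_scaleShift_eq : pdl (scaleShift k c V) = scaleShift k c (pdl V) := by
  ext l h t
  exact pdl_scaleShift k c V l h t

theorem pdh_scaleShift_eq : pdh (scaleShift k c V) = scaleShift k c (pdh V) := by
  ext l h t
  exact pdh_scaleShift k c V l h t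

-- The second partials are first partials of first partials, e.g. `pdll V = pdl (pdl V)`.
theorem pdll_scaleShift : pdll (scaleShift k c V) l h t = k * pdll V (l - c) h t := by
  change pdl (pdl _) l h t = k * pdl (pdl V) (l - c) h t
  rw [pdl_scaleShift_eq, pdl_scaleShift]

theorem pdhh_scaleShift : pdhh (scaleShift k c V) l h t = k * pdhh V (l - c) h t := by
  change pdh (pdh _) l h t = k * pdh (pdh V) (l - c) h t
  rw [pdh_scaleShift_eq, pdh_scaleShift]

theorem pdlh_scaleShift : pdlh (scaleShift k c V) l h t = k * pdlh V (l - c) h t := by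
  change pdh (pdl _) l h t = k * pdh (pdl V) (l - c) h t
  rw [pdl_scaleShift_eq, pdh_scaleShift]

theorem contDiff_scaleShift {n : WithTop ℕ∞}
    (hV : ContDiff ℝ n (fun p : ℝ × ℝ × ℝ => V p.1 p.2.1 p.2.2)) :
    ContDiff ℝ n (fun p : ℝ × ℝ × ℝ => scaleShift k c V p.1 p.2.1 p.2.2) :=
  contDiff_const.mul (hV.comp ((contDiff_fst.sub contDiff_const).prodMk contDiff_snd))

end scaleShift

-- `vt vhh vl vh vll vlh` stand for `V_t, V_hh, V_l, V_h, V_ll, V_lh`.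
noncomputable def expnOperator (r σ η a α μ δ ρ : ℝ) (Φ : ℝ → ℝ)
    (l h t vt vhh vl vh vll vlh : ℝ) : ℝ :=
  vt + (1/2) * η^2 * h^2 * vhh + (r * l + δ * h) * vl + (μ - δ) * h * vh
    - ((α - r)^2 * vl^2 + 2 * (α - r) * η * ρ * h * vl * vlh + η^2 * ρ^2 * σ^2 * h^2 * vlh^2)
      / (2 * σ^2 * vll)
    + (1/a) * vl * Real.log vl - (1/a) * (1 + Real.log (Φ t)) * vl - (Real.log a / a) * vl

theorem expnOperator_scale_shift (r σ η a α μ δ ρ : ℝ) (Φ : ℝ → ℝ)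
    {k : ℝ} (c : ℝ) (hk : k ≠ 0) (l h t vt vhh : ℝ) {vl : ℝ} (hvl : vl ≠ 0) (vh vll vlh : ℝ) :
    expnOperator r σ η a α μ δ ρ Φ l h t (k * vt) (k * vhh) (k * vl) (k * vh) (k * vll) (k * vlh)
      = k * expnOperator r σ η a α μ δ ρ Φ (l - c) h t vt vhh vl vh vll vlh
        + k * vl * (r * c + Real.log k / a) := by
  set q := (α - r)^2 * vl^2 + 2 * (α - r) * η * ρ * h * vl * vlh + η^2 * ρ^2 * σ^2 * h^2 * vlh^2
  have hq : ((α - r)^2 * (k * vl)^2 + 2 * (α - r) * η * ρ * h * (k * vl) * (k * vlh)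
        + η^2 * ρ^2 * σ^2 * h^2 * (k * vlh)^2) / (2 * σ^2 * (k * vll))
      = k * (q / (2 * σ^2 * vll)) := by
    rw [show 2 * σ^2 * (k * vll) = k * (2 * σ^2 * vll) by ring,
      show _ + _ + η^2 * ρ^2 * σ^2 * h^2 * (k * vlh)^2 = k * (k * q) by ring,
      mul_div_mul_left _ _ hk, mul_div_assoc]
  simp only [expnOperator]
  rw [hq, Real.log_mul hk hvl]
  ring

theorem SolvesEXPn.scaleShift {r σ η a α μ δ ρ : ℝ} {Φ : ℝ → ℝ} {V : ℝ → ℝ → ℝ → ℝ}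
    (hV : SolvesEXPn r σ η a α μ δ ρ Φ V) {k c : ℝ} (hk : 0 < k)
    (hkc : r * c + Real.log k / a = 0) :
    SolvesEXPn r σ η a α μ δ ρ Φ (scaleShift k c V) := by
  obtain ⟨hC, hpos, hneg, hpde⟩ := hV
  refine ⟨contDiff_scaleShift k c V hC, fun l h t => ?_, fun l h t => ?_, fun l h t => ?_⟩
  · rw [pdl_scaleShift]
    exact mul_pos hk (hpos _ _ _)
  · rw [pdll_scaleShift]
    exact mul_neg_of_pos_of_neg hk (hneg _ _ _)
  · have hop := expnOperator_scale_shift r σ η a α μ δ ρ Φ c hk.ne' l h t (pdt V (l - c) h t)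
      (pdhh V (l - c) h t) (hpos (l - c) h t).ne' (pdh V (l - c) h t) (pdll V (l - c) h t)
      (pdlh V (l - c) h t)
    rw [pdt_scaleShift, pdhh_scaleShift, pdl_scaleShift, pdh_scaleShift, pdll_scaleShift,
      pdlh_scaleShift]
    change expnOperator r σ η a α μ δ ρ Φ l h t _ _ _ _ _ _ = 0
    rw [hop, hkc, show expnOperator r σ η a α μ δ ρ Φ (l - c) h t _ _ _ _ _ _ = 0 from hpde _ _ _]
    ring

theorem stmt_9_general (r σ η a α μ δ ρ : ℝ) (hr : r ≠ 0)
    (Φ : ℝ → ℝ)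
    (V : ℝ → ℝ → ℝ → ℝ) (hV : SolvesEXPn r σ η a α μ δ ρ Φ V) (ε : ℝ) :
    SolvesEXPn r σ η a α μ δ ρ Φ
      (fun l h t => Real.exp (-ε) * V (l - ε / (a * r)) h t) := by
  refine hV.scaleShift (Real.exp_pos _) ?_
  rw [Real.log_exp, mul_div_left_comm, mul_comm a r, div_mul_cancel_left₀ hr]
  ring

/-- If `V` solves the EXPn–HJB equation (with `r ≠ 0`) then for
every `ε ∈ ℝ` the function `W(l,h,t) = e^{−ε}·V(l − ε/(a r), h, t)` also solves
it (symmetry generated by `U₁ = (1/(ar)) ∂/∂l − V ∂/∂V`). -/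
theorem stmt_9 (r σ η a α μ δ ρ : ℝ) (hσ : 0 < σ) (ha : 0 < a) (hr : r ≠ 0)
    (Φ : ℝ → ℝ) (hΦ : ∀ t : ℝ, 0 < Φ t)
    (V : ℝ → ℝ → ℝ → ℝ) (hV : SolvesEXPn r σ η a α μ δ ρ Φ V) (ε : ℝ) :
    SolvesEXPn r σ η a α μ δ ρ Φ
      (fun l h t => Real.exp (-ε) * V (l - ε / (a * r)) h t) :=
  stmt_9_general r σ η a α μ δ ρ hr Φ V hV ε
end

section
/- Assume r ≠ 0 and the exponential survival function Φ̄(t) = e^{−κ t} with κ > 0. Let V : ℝ³ → ℝ solve the EXPn–HJB equation. Then for every s ∈ ℝ the function W(l,h,t) := V(l − κ s/(a r²), h, t + s/r) also solves the EXPn–HJB equation. (This is the symmetry generated by the generator U₃, which for the exponential distribution reads −(κ/(a r²)) ∂/∂l + (1/r) ∂/∂t.) -/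
/-!
Translations in `l` and `t` commute with partial derivatives, so the only terms of the equation
that change under `(l, t) ↦ (l - c, t + d)` are the two that depend explicitly on `l` and `t`:
`r l V_l` changes by `r c V_l`, and `-(1/a) ln Φ̄(t) V_l = (κ t / a) V_l` by `-(κ d / a) V_l`.
These cancel exactly when `r c = κ d / a`, which holds for `c = κ s / (a r²)`, `d = s / r`.
-/

section Shift

variable (V : ℝ → ℝ → ℝ → ℝ) (c d l h t : ℝ)

lemma pdl_shift : pdl (fun l h t => V (l - c) h (t + d)) l h t = pdl V (l - c) h (t + d) :=
  deriv_comp_sub_const (fun x => V x h (t + d)) c l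

lemma pdh_shift : pdh (fun l h t => V (l - c) h (t + d)) l h t = pdh V (l - c) h (t + d) := rfl

lemma pdt_shift : pdt (fun l h t => V (l - c) h (t + d)) l h t = pdt V (l - c) h (t + d) :=
  deriv_comp_add_const (fun u => V (l - c) h u) d t

lemma pdll_shift : pdll (fun l h t => V (l - c) h (t + d)) l h t = pdll V (l - c) h (t + d) := by
  unfold pdll
  simp only [pdl_shift]
  exact deriv_comp_sub_const (fun x => pdl V x h (t + d)) c l

lemma pdlh_shift : pdlh (fun l h t => V (l - c) h (t + d)) l h t = pdlh V (l - c) h (t + d) := by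
  unfold pdlh
  simp only [pdl_shift]

lemma pdhh_shift : pdhh (fun l h t => V (l - c) h (t + d)) l h t = pdhh V (l - c) h (t + d) := rfl

end Shift

theorem SolvesEXPn.comp_shift {r σ η a α μ δ ρ : ℝ} {Φ : ℝ → ℝ} {V : ℝ → ℝ → ℝ → ℝ}
    (hV : SolvesEXPn r σ η a α μ δ ρ Φ V) {c d : ℝ}
    (hcd : ∀ t, r * c = (Real.log (Φ t) - Real.log (Φ (t + d))) / a) :
    SolvesEXPn r σ η a α μ δ ρ Φ (fun l h t => V (l - c) h (t + d)) := by
  obtain ⟨hC, hpos, hneg, heq⟩ := hV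
  have hshift : ContDiff ℝ 2 fun p : ℝ × ℝ × ℝ => (p.1 - c, p.2.1, p.2.2 + d) := by fun_prop
  refine ⟨hC.comp hshift, fun l h t => ?_, fun l h t => ?_, fun l h t => ?_⟩
  · rw [pdl_shift]
    exact hpos _ _ _
  · rw [pdll_shift]
    exact hneg _ _ _
  · rw [pdl_shift, pdh_shift, pdt_shift, pdll_shift, pdlh_shift, pdhh_shift]
    linear_combination heq (l - c) h (t + d) + pdl V (l - c) h (t + d) * hcd t

theorem stmt_10_general (r σ η a α μ δ ρ κ : ℝ) (ha : 0 < a) (hr : r ≠ 0)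
    (V : ℝ → ℝ → ℝ → ℝ)
    (hV : SolvesEXPn r σ η a α μ δ ρ (fun t => Real.exp (-(κ * t))) V) (s : ℝ) :
    SolvesEXPn r σ η a α μ δ ρ (fun t => Real.exp (-(κ * t)))
      (fun l h t => V (l - κ * s / (a * r^2)) h (t + s / r)) := by
  refine hV.comp_shift fun t => ?_
  simp only [Real.log_exp]
  field_simp
  ring

/-- For the exponential survival function `Φ̄(t) = e^{−κt}` with
`κ > 0` and `r ≠ 0`: if `V` solves the EXPn–HJB equation then for every `s ∈ ℝ`
the function `W(l,h,t) = V(l − κ s/(a r²), h, t + s/r)` also solves it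
(symmetry generated by `U₃ = −(κ/(a r²)) ∂/∂l + (1/r) ∂/∂t`). -/
theorem stmt_10 (r σ η a α μ δ ρ κ : ℝ) (hσ : 0 < σ) (ha : 0 < a) (hr : r ≠ 0)
    (hκ : 0 < κ)
    (V : ℝ → ℝ → ℝ → ℝ)
    (hV : SolvesEXPn r σ η a α μ δ ρ (fun t => Real.exp (-(κ * t))) V) (s : ℝ) :
    SolvesEXPn r σ η a α μ δ ρ (fun t => Real.exp (-(κ * t)))
      (fun l h t => V (l - κ * s / (a * r^2)) h (t + s / r)) :=
  stmt_10_general r σ η a α μ δ ρ κ ha hr V hV s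
end

section
/- Let a > 0, r ≠ 0 and κ ∈ ℝ. Define the vector fields X, Y : ℝ⁴ → ℝ⁴ on ℝ⁴ with coordinates (l, h, t, V) by X(l,h,t,V) = (−κ/(a r²), 0, 1/r, 0) and Y(l,h,t,V) = (e^{r t}, 0, 0, 0). Then the Lie bracket [X, Y](x) = (DY)(x)·X(x) − (DX)(x)·Y(x) equals Y(x) for every x ∈ ℝ⁴. (This is the commutation relation [U₃, U₄] = U₄ of the symmetry algebra L₄^{EXPn} for the exponential liquidation time distribution Φ̄(t) = e^{−κt}.) -/
noncomputable def lieBracket4 (X Y : ℝ × ℝ × ℝ × ℝ → ℝ × ℝ × ℝ × ℝ)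
    (x : ℝ × ℝ × ℝ × ℝ) : ℝ × ℝ × ℝ × ℝ :=
  fderiv ℝ Y x (X x) - fderiv ℝ X x (Y x)

theorem lieBracket4_const_left (c : ℝ × ℝ × ℝ × ℝ) (Y : ℝ × ℝ × ℝ × ℝ → ℝ × ℝ × ℝ × ℝ)
    (x : ℝ × ℝ × ℝ × ℝ) : lieBracket4 (fun _ => c) Y x = fderiv ℝ Y x c := by
  simp [lieBracket4]

theorem fderiv_exp_mul_coord_apply (r : ℝ) (x v : ℝ × ℝ × ℝ × ℝ) :
    fderiv ℝ (fun p : ℝ × ℝ × ℝ × ℝ => (Real.exp (r * p.2.2.1), (0 : ℝ), (0 : ℝ), (0 : ℝ))) x v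
      = (Real.exp (r * x.2.2.1) * (r * v.2.2.1), 0, 0, 0) := by
  have hcoord : HasFDerivAt (fun p : ℝ × ℝ × ℝ × ℝ => Real.exp (r * p.2.2.1)) _ x :=
    (((hasFDerivAt_id x).snd.snd.fst).const_mul r).exp
  rw [(hcoord.prodMk (hasFDerivAt_const ((0 : ℝ), (0 : ℝ), (0 : ℝ)) x)).fderiv]
  simp [Prod.zero_eq_mk]

theorem stmt_12_general (a r κ : ℝ) (hr : r ≠ 0) :
    ∀ x : ℝ × ℝ × ℝ × ℝ,
      lieBracket4 (fun _ => (-κ/(a*r^2), 0, 1/r, 0))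
        (fun p => (Real.exp (r * p.2.2.1), 0, 0, 0)) x
        = (Real.exp (r * x.2.2.1), 0, 0, 0) := by
  intro x
  rw [lieBracket4_const_left, fderiv_exp_mul_coord_apply, mul_one_div_cancel hr, mul_one]

/-- With coordinates `(l,h,t,V)` on `ℝ⁴`, the vector fields
`X = (−κ/(a r²), 0, 1/r, 0)` (the generator `U₃` for `Φ̄(t) = e^{−κt}`) and
`Y = (e^{rt}, 0, 0, 0)` (the generator `U₄`) satisfy `[X,Y] = Y`, i.e. the
commutation relation `[U₃,U₄] = U₄` of the symmetry algebra `L₄^{EXPn}`. -/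
theorem stmt_12 (a r κ : ℝ) (ha : 0 < a) (hr : r ≠ 0) :
    ∀ x : ℝ × ℝ × ℝ × ℝ,
      lieBracket4 (fun _ => (-κ/(a*r^2), 0, 1/r, 0))
        (fun p => (Real.exp (r * p.2.2.1), 0, 0, 0)) x
        = (Real.exp (r * x.2.2.1), 0, 0, 0) :=
  stmt_12_general a r κ hr
end

section
/- Assume r ≠ 0, a > 0, κ > 0 and Φ̄(t) = e^{−κ t}. Let Ṽ : ℝ³ → ℝ solve the EXPn–HJB equation. Then the function V(l,h,t) := Ṽ(l + ln a/(a r), h, t) + e^{−κ t}/(a κ) solves the EXPp–HJB equation. (This is the one-to-one substitution proving that the optimization problems with the negative and positive exponential utility functions are equivalent.) -/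
/-- `V(l,h,t)` is a (C², `V_l > 0`, `V_{ll} < 0`) solution of the EXPp–HJB equation
with survival function `Φ`. -/
def SolvesEXPp (r σ η a α μ δ ρ : ℝ) (Φ : ℝ → ℝ) (V : ℝ → ℝ → ℝ → ℝ) : Prop :=
  ContDiff ℝ 2 (fun p : ℝ × ℝ × ℝ => V p.1 p.2.1 p.2.2) ∧
  (∀ l h t : ℝ, 0 < pdl V l h t) ∧
  (∀ l h t : ℝ, pdll V l h t < 0) ∧
  (∀ l h t : ℝ,
    pdt V l h t + (1/2) * η^2 * h^2 * pdhh V l h t + (r * l + δ * h) * pdl V l h t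
      + (μ - δ) * h * pdh V l h t
      - ((α - r)^2 * (pdl V l h t)^2
          + 2 * (α - r) * η * ρ * h * pdl V l h t * pdlh V l h t
          + η^2 * ρ^2 * σ^2 * h^2 * (pdlh V l h t)^2) / (2 * σ^2 * pdll V l h t)
      + (1/a) * pdl V l h t * Real.log (pdl V l h t)
      - (1/a) * (1 + Real.log (Φ t)) * pdl V l h t
      + Φ t / a = 0)


section ShiftAdd

variable (V : ℝ → ℝ → ℝ → ℝ) (c : ℝ) (g : ℝ → ℝ) (l h t : ℝ)

theorem pdl_shift_add : pdl (fun l h t => V (l + c) h t + g t) l h t = pdl V (l + c) h t := by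
  simp only [pdl, deriv_add_const]
  exact deriv_comp_add_const (fun x => V x h t) c l

theorem pdh_shift_add : pdh (fun l h t => V (l + c) h t + g t) l h t = pdh V (l + c) h t := by
  simp only [pdh, deriv_add_const]

theorem pdll_shift_add : pdll (fun l h t => V (l + c) h t + g t) l h t = pdll V (l + c) h t := by
  simp only [pdll, pdl_shift_add]
  exact deriv_comp_add_const (fun x => pdl V x h t) c l

theorem pdhh_shift_add : pdhh (fun l h t => V (l + c) h t + g t) l h t = pdhh V (l + c) h t := by
  simp only [pdhh, pdh_shift_add]

theorem pdlh_shift_add : pdlh (fun l h t => V (l + c) h t + g t) l h t = pdlh V (l + c) h t := by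
  simp only [pdlh, pdl_shift_add]

theorem pdt_shift_add (hV : DifferentiableAt ℝ (fun s => V (l + c) h s) t)
    (hg : DifferentiableAt ℝ g t) :
    pdt (fun l h t => V (l + c) h t + g t) l h t = pdt V (l + c) h t + deriv g t :=
  deriv_fun_add hV hg

variable {V g}

theorem contDiff_shift_add {n : WithTop ℕ∞}
    (hV : ContDiff ℝ n (fun p : ℝ × ℝ × ℝ => V p.1 p.2.1 p.2.2)) (hg : ContDiff ℝ n g) :
    ContDiff ℝ n (fun p : ℝ × ℝ × ℝ => V (p.1 + c) p.2.1 p.2.2 + g p.2.2) :=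
  (hV.comp ((contDiff_fst.add contDiff_const).prodMk contDiff_snd)).add
    (hg.comp (contDiff_snd.comp contDiff_snd))

theorem differentiableAt_time_of_contDiff {n : WithTop ℕ∞} (hn : n ≠ 0)
    (hV : ContDiff ℝ n (fun p : ℝ × ℝ × ℝ => V p.1 p.2.1 p.2.2)) :
    DifferentiableAt ℝ (fun s => V l h s) t :=
  ((hV.differentiable hn).comp
    ((differentiable_const l).prodMk ((differentiable_const h).prodMk differentiable_id))) t

end ShiftAdd

/-- With `c = ln a / (a r)`, the drift term `r l V_l` at the shifted point `l + c` is
`r (l + c) V_l - (ln a / a) V_l`, which supplies the `ln a` term of EXPn; and `g' = -Φ / a`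
makes `W_t = V_t - Φ / a`, which cancels the `Φ / a` term of EXPp. -/
theorem SolvesEXPn.solvesEXPp_shift_add {r σ η a α μ δ ρ : ℝ} {Φ g : ℝ → ℝ}
    {V : ℝ → ℝ → ℝ → ℝ} (hV : SolvesEXPn r σ η a α μ δ ρ Φ V) (hr : r ≠ 0)
    (hg : ContDiff ℝ 2 g) (hg' : ∀ t, HasDerivAt g (-(Φ t / a)) t) :
    SolvesEXPp r σ η a α μ δ ρ Φ
      (fun l h t => V (l + Real.log a / (a * r)) h t + g t) := by
  obtain ⟨hC2, hpos, hneg, hHJB⟩ := hV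
  set c := Real.log a / (a * r)
  have hrc : r * c = Real.log a / a := by
    rw [mul_comm, div_mul_eq_mul_div, mul_div_mul_right _ _ hr]
  refine ⟨contDiff_shift_add c hC2 hg, fun l h t => ?_, fun l h t => ?_, fun l h t => ?_⟩
  · rw [pdl_shift_add]; exact hpos _ _ _
  · rw [pdll_shift_add]; exact hneg _ _ _
  · rw [pdt_shift_add V c g l h t (differentiableAt_time_of_contDiff _ _ _ two_ne_zero hC2)
      (hg' t).differentiableAt, (hg' t).deriv, pdl_shift_add, pdh_shift_add, pdll_shift_add,
      pdhh_shift_add, pdlh_shift_add]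
    linear_combination hHJB (l + c) h t - pdl V (l + c) h t * hrc

theorem stmt_13_general (r σ η a α μ δ ρ κ : ℝ) (hr : r ≠ 0)
    (hκ : 0 < κ)
    (V : ℝ → ℝ → ℝ → ℝ)
    (hV : SolvesEXPn r σ η a α μ δ ρ (fun t => Real.exp (-(κ * t))) V) :
    SolvesEXPp r σ η a α μ δ ρ (fun t => Real.exp (-(κ * t)))
      (fun l h t => V (l + Real.log a / (a * r)) h t + Real.exp (-(κ * t)) / (a * κ)) := by
  refine hV.solvesEXPp_shift_add hr (by fun_prop) fun t => ?_
  refine (((hasDerivAt_id' t).const_mul κ).fun_neg.exp.div_const (a * κ)).congr_deriv ?_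
  field_simp [hκ.ne']

/-- For `Φ̄(t) = e^{−κt}` (`κ > 0`, `r ≠ 0`, `a > 0`): if `Ṽ`
solves the EXPn–HJB equation, then
`V(l,h,t) = Ṽ(l + ln a/(a r), h, t) + e^{−κ t}/(a κ)` solves the EXPp–HJB
equation — the one-to-one substitution showing that the optimization problems
with the negative and positive exponential utility functions are equivalent. -/
theorem stmt_13 (r σ η a α μ δ ρ κ : ℝ) (hσ : 0 < σ) (ha : 0 < a) (hr : r ≠ 0)
    (hκ : 0 < κ)
    (V : ℝ → ℝ → ℝ → ℝ)
    (hV : SolvesEXPn r σ η a α μ δ ρ (fun t => Real.exp (-(κ * t))) V) :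
    SolvesEXPp r σ η a α μ δ ρ (fun t => Real.exp (-(κ * t)))
      (fun l h t => V (l + Real.log a / (a * r)) h t + Real.exp (-(κ * t)) / (a * κ)) :=
  stmt_13_general r σ η a α μ δ ρ κ hr hκ V hV
end

section
/- Assume 0 < γ < 1, a > 0, r ≠ 0, κ > 0 and Φ̄(t) = e^{−κ t}. Let Ṽ : ℝ³ → ℝ solve the HARA₁–HJB equation. Then the function V(l,h,t) := Ṽ(l − (1−γ)/(a r), h, t) + ((1−γ)/(γ κ))·e^{−κ t} solves the HARA₂–HJB equation. (This is the substitution l̃ = l − (1−γ)/(ar), Ṽ = V + ((1−γ)/γ)∫Φ̄(t)dt, showing the two forms of the HARA optimization problem are equivalent.) -/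
/-- `V(l,h,t)` is a (C², `V_l > 0`, `V_{ll} < 0`) solution of the HARA₁–HJB
equation (HARA utility in the first form) with survival function `Φ`. -/
def SolvesHARA1 (r σ η a α μ δ ρ γ : ℝ) (Φ : ℝ → ℝ) (V : ℝ → ℝ → ℝ → ℝ) : Prop :=
  ContDiff ℝ 2 (fun p : ℝ × ℝ × ℝ => V p.1 p.2.1 p.2.2) ∧
  (∀ l h t : ℝ, 0 < pdl V l h t) ∧
  (∀ l h t : ℝ, pdll V l h t < 0) ∧
  (∀ l h t : ℝ,
    pdt V l h t + (1/2) * η^2 * h^2 * pdhh V l h t + (r * l + δ * h) * pdl V l h t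
      + (μ - δ) * h * pdh V l h t
      - ((α - r)^2 * (pdl V l h t)^2
          + 2 * (α - r) * η * ρ * h * pdl V l h t * pdlh V l h t
          + η^2 * ρ^2 * σ^2 * h^2 * (pdlh V l h t)^2) / (2 * σ^2 * pdll V l h t)
      + ((1 - γ)^2 / γ) * (Φ t) ^ (1/(1 - γ)) * (pdl V l h t) ^ (-γ/(1 - γ))
      - ((1 - γ)/γ) * Φ t = 0)

/-- `V(l,h,t)` is a (C², `V_l > 0`, `V_{ll} < 0`) solution of the HARA₂–HJB
equation (HARA utility in the second form) with survival function `Φ`. -/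
def SolvesHARA2 (r σ η a α μ δ ρ γ : ℝ) (Φ : ℝ → ℝ) (V : ℝ → ℝ → ℝ → ℝ) : Prop :=
  ContDiff ℝ 2 (fun p : ℝ × ℝ × ℝ => V p.1 p.2.1 p.2.2) ∧
  (∀ l h t : ℝ, 0 < pdl V l h t) ∧
  (∀ l h t : ℝ, pdll V l h t < 0) ∧
  (∀ l h t : ℝ,
    pdt V l h t + (1/2) * η^2 * h^2 * pdhh V l h t + (r * l + δ * h) * pdl V l h t
      + (μ - δ) * h * pdh V l h t
      - ((α - r)^2 * (pdl V l h t)^2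
          + 2 * (α - r) * η * ρ * h * pdl V l h t * pdlh V l h t
          + η^2 * ρ^2 * σ^2 * h^2 * (pdlh V l h t)^2) / (2 * σ^2 * pdll V l h t)
      + ((1 - γ)^2 / γ) * (Φ t) ^ (1/(1 - γ)) * (pdl V l h t) ^ (-γ/(1 - γ))
      - ((1 - γ)/a) * pdl V l h t = 0)

/-! The substitution `l̃ = l − (1−γ)/(a r)` absorbs the extra drift `((1−γ)/a)·V_l` of the
HARA₂ equation into the term `r l V_l`, since `r·(1−γ)/(a r) = (1−γ)/a`; it changes no
derivative of `V` other than by moving the point of evaluation. Adding a primitive `g` of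
`−((1−γ)/γ)·Φ̄` then removes the `−((1−γ)/γ)·Φ̄` term through `V_t`. For `Φ̄(t) = e^{−κt}`
one may take `g(t) = ((1−γ)/(γκ))·e^{−κt}`. -/

section ShiftAddTime

variable (V : ℝ → ℝ → ℝ → ℝ) (g : ℝ → ℝ) (c l h t : ℝ)

theorem pdl_shift_add_time :
    pdl (fun l h t => V (l - c) h t + g t) l h t = pdl V (l - c) h t := by
  simp only [pdl, deriv_add_const]
  exact deriv_comp_sub_const (fun x => V x h t) c l

theorem pdh_shift_add_time :
    pdh (fun l h t => V (l - c) h t + g t) l h t = pdh V (l - c) h t := by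
  simp only [pdh, deriv_add_const]

theorem pdll_shift_add_time :
    pdll (fun l h t => V (l - c) h t + g t) l h t = pdll V (l - c) h t := by
  simp only [pdll, pdl_shift_add_time]
  exact deriv_comp_sub_const (fun x => pdl V x h t) c l

theorem pdhh_shift_add_time :
    pdhh (fun l h t => V (l - c) h t + g t) l h t = pdhh V (l - c) h t := by
  simp only [pdhh, pdh_shift_add_time]

theorem pdlh_shift_add_time :
    pdlh (fun l h t => V (l - c) h t + g t) l h t = pdlh V (l - c) h t := by
  simp only [pdlh, pdl_shift_add_time]

theorem pdt_shift_add_time (hV : DifferentiableAt ℝ (fun s => V (l - c) h s) t)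
    (hg : DifferentiableAt ℝ g t) :
    pdt (fun l h t => V (l - c) h t + g t) l h t = pdt V (l - c) h t + deriv g t :=
  deriv_add hV hg

theorem contDiff_shift_add_time {n : WithTop ℕ∞}
    (hV : ContDiff ℝ n (fun p : ℝ × ℝ × ℝ => V p.1 p.2.1 p.2.2)) (hg : ContDiff ℝ n g) :
    ContDiff ℝ n (fun p : ℝ × ℝ × ℝ => V (p.1 - c) p.2.1 p.2.2 + g p.2.2) := by
  have hshift : ContDiff ℝ n (fun p : ℝ × ℝ × ℝ => ((p.1 - c, p.2.1, p.2.2) : ℝ × ℝ × ℝ)) :=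
    (contDiff_fst.sub contDiff_const).prodMk
      ((contDiff_fst.comp contDiff_snd).prodMk (contDiff_snd.comp contDiff_snd))
  exact (hV.comp hshift).add (hg.comp (contDiff_snd.comp contDiff_snd))

end ShiftAddTime

theorem ContDiff.differentiableAt_uncurry₃_right {V : ℝ → ℝ → ℝ → ℝ} {n : WithTop ℕ∞}
    (hV : ContDiff ℝ n (fun p : ℝ × ℝ × ℝ => V p.1 p.2.1 p.2.2)) (hn : 1 ≤ n) (l h t : ℝ) :
    DifferentiableAt ℝ (fun s => V l h s) t :=
  ((hV.differentiable (zero_lt_one.trans_le hn).ne').comp (differentiable_const l |>.prodMk <|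
    (differentiable_const h).prodMk differentiable_id)).differentiableAt

theorem SolvesHARA1.shift_add_time {r σ η a α μ δ ρ γ : ℝ} {Φ g : ℝ → ℝ}
    {V : ℝ → ℝ → ℝ → ℝ} (hV : SolvesHARA1 r σ η a α μ δ ρ γ Φ V) (hr : r ≠ 0)
    (hg : ContDiff ℝ 2 g) (hg' : ∀ t, deriv g t = -((1 - γ) / γ * Φ t)) :
    SolvesHARA2 r σ η a α μ δ ρ γ Φ (fun l h t => V (l - (1 - γ) / (a * r)) h t + g t) := by
  obtain ⟨hC, hpos, hneg, hHJB⟩ := hV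
  set c := (1 - γ) / (a * r)
  have hrc : r * c = (1 - γ) / a := by
    rw [mul_div_assoc', mul_comm a, mul_div_mul_left _ _ hr]
  refine ⟨contDiff_shift_add_time V g c hC hg, fun l h t => ?_, fun l h t => ?_, fun l h t => ?_⟩
  · rw [pdl_shift_add_time]; exact hpos _ _ _
  · rw [pdll_shift_add_time]; exact hneg _ _ _
  · rw [pdt_shift_add_time V g c l h t (hC.differentiableAt_uncurry₃_right one_le_two _ _ _)
      (hg.differentiable two_ne_zero t), hg', pdl_shift_add_time, pdh_shift_add_time,
      pdll_shift_add_time, pdhh_shift_add_time, pdlh_shift_add_time]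
    linear_combination hHJB (l - c) h t + pdl V (l - c) h t * hrc

theorem hasDerivAt_div_mul_exp_neg_mul {κ : ℝ} (hκ : κ ≠ 0) (b d t : ℝ) :
    HasDerivAt (fun s => b / (d * κ) * Real.exp (-(κ * s)))
      (-(b / d * Real.exp (-(κ * t)))) t := by
  refine ((((hasDerivAt_id' t).const_mul κ).neg.exp).const_mul (b / (d * κ))).congr_deriv ?_
  simp only [Pi.neg_apply]
  field_simp

theorem stmt_14_general (r σ η a α μ δ ρ κ γ : ℝ) (hr : r ≠ 0) (hκ : 0 < κ)
    (V : ℝ → ℝ → ℝ → ℝ)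
    (hV : SolvesHARA1 r σ η a α μ δ ρ γ (fun t => Real.exp (-(κ * t))) V) :
    SolvesHARA2 r σ η a α μ δ ρ γ (fun t => Real.exp (-(κ * t)))
      (fun l h t => V (l - (1 - γ) / (a * r)) h t
        + ((1 - γ)/(γ * κ)) * Real.exp (-(κ * t))) := by
  refine hV.shift_add_time hr ?_ fun t => (hasDerivAt_div_mul_exp_neg_mul hκ.ne' _ _ t).deriv
  exact contDiff_const.mul (Real.contDiff_exp.comp (contDiff_const.mul contDiff_id).neg)

/-- For `Φ̄(t) = e^{−κt}` (`0 < γ < 1`, `a > 0`, `r ≠ 0`, `κ > 0`):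
if `Ṽ` solves the HARA₁–HJB equation, then
`V(l,h,t) = Ṽ(l − (1−γ)/(a r), h, t) + ((1−γ)/(γκ))·e^{−κt}` solves the
HARA₂–HJB equation — the substitution showing that the two forms of the HARA
optimization problem are equivalent. -/
theorem stmt_14 (r σ η a α μ δ ρ κ γ : ℝ) (hσ : 0 < σ) (ha : 0 < a) (hr : r ≠ 0)
    (hκ : 0 < κ) (hγ0 : 0 < γ) (hγ1 : γ < 1)
    (V : ℝ → ℝ → ℝ → ℝ)
    (hV : SolvesHARA1 r σ η a α μ δ ρ γ (fun t => Real.exp (-(κ * t))) V) :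
    SolvesHARA2 r σ η a α μ δ ρ γ (fun t => Real.exp (-(κ * t)))
      (fun l h t => V (l - (1 - γ) / (a * r)) h t
        + ((1 - γ)/(γ * κ)) * Real.exp (-(κ * t))) :=
  stmt_14_general r σ η a α μ δ ρ κ γ hr hκ V hV
end

section
/- Assume r ≠ 0, a > 0, κ > 0 and Φ̄(t) = e^{−κ t}. Let W = W(z,h) : ℝ² → ℝ be a C² function with W_z > 0 and W_{zz} < 0 everywhere, satisfying at every point the two dimensional PDE (1/2)η²h²W_{hh} + (μ−δ)h W_h + (r z + δ h)W_z + (1/a)W_z ln W_z − ((α−r)²W_z² + 2(α−r)ηρh W_z W_{zh} + η²ρ²σ²h²W_{zh}²)/(2σ²W_{zz}) = 0. Then V(l,h,t) := W(l + κ t/(a r) + (1/(a r))(κ/r − 1 − ln a), h) solves the EXPn–HJB equation. (This is the invariant reduction corresponding to the subalgebra h₂ = ⟨e₃⟩.) -/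
/-- Partial derivative of `W(z,h)` in `z`. -/
noncomputable def qdz (W : ℝ → ℝ → ℝ) (z h : ℝ) : ℝ := deriv (fun x => W x h) z
/-- Partial derivative of `W(z,h)` in `h`. -/
noncomputable def qdh (W : ℝ → ℝ → ℝ) (z h : ℝ) : ℝ := deriv (fun y => W z y) h
/-- Second partial derivative `W_{zz}`. -/
noncomputable def qdzz (W : ℝ → ℝ → ℝ) (z h : ℝ) : ℝ := deriv (fun x => qdz W x h) z
/-- Second partial derivative `W_{hh}`. -/
noncomputable def qdhh (W : ℝ → ℝ → ℝ) (z h : ℝ) : ℝ := deriv (fun y => qdh W z y) h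
/-- Mixed partial derivative `W_{zh}`. -/
noncomputable def qdzh (W : ℝ → ℝ → ℝ) (z h : ℝ) : ℝ := deriv (fun y => qdz W z y) h

/-!
The symmetry `e₃` shifts `l` and `t` together, so its invariants are `h` and
`z = l + κt/(ar) + c`. For `V(l,h,t) = W(z,h)` every partial derivative of `V` is the
corresponding one of `W` at `(z,h)`, except `V_t = (κ/(ar)) W_z`. Since `ln Φ̄(t) = −κt`, the terms
of the EXPn–HJB equation that are linear in `V_l`, including `V_t`, add up to `r z V_l` precisely
when `c = (κ/r − 1 − ln a)/(ar)`; what remains is the PDE for `W`.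
-/

def travelingWave (W : ℝ → ℝ → ℝ) (k c : ℝ) : ℝ → ℝ → ℝ → ℝ :=
  fun l h t => W (l + k * t + c) h

section travelingWave

variable (W : ℝ → ℝ → ℝ) (k c l h t : ℝ)

theorem pdl_travelingWave :
    pdl (travelingWave W k c) l h t = qdz W (l + k * t + c) h := by
  simp only [pdl, travelingWave, add_assoc]
  exact deriv_comp_add_const (fun x => W x h) (k * t + c) l

theorem pdt_travelingWave :
    pdt (travelingWave W k c) l h t = k * qdz W (l + k * t + c) h := by
  have hshift : ∀ y, deriv (fun x => W (l + x + c) h) y = qdz W (l + y + c) h := fun y => by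
    rw [show (fun x => W (l + x + c) h) = fun x => W (x + (l + c)) h by funext x; congr 1; ring]
    refine (deriv_comp_add_const (fun x => W x h) (l + c) y).trans ?_
    congr 1
    ring
  simp only [pdt, travelingWave]
  rw [← hshift]
  exact deriv_comp_mul_left k (fun x => W (l + x + c) h) t

theorem pdh_travelingWave :
    pdh (travelingWave W k c) l h t = qdh W (l + k * t + c) h := rfl

theorem pdll_travelingWave :
    pdll (travelingWave W k c) l h t = qdzz W (l + k * t + c) h := by
  simp only [pdll, pdl_travelingWave, add_assoc]
  exact deriv_comp_add_const (fun x => qdz W x h) (k * t + c) l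

theorem pdlh_travelingWave :
    pdlh (travelingWave W k c) l h t = qdzh W (l + k * t + c) h := by
  simp only [pdlh, pdl_travelingWave]
  rfl

theorem pdhh_travelingWave :
    pdhh (travelingWave W k c) l h t = qdhh W (l + k * t + c) h := rfl

theorem contDiff_travelingWave {n : WithTop ℕ∞}
    (hW : ContDiff ℝ n (fun p : ℝ × ℝ => W p.1 p.2)) :
    ContDiff ℝ n (fun p : ℝ × ℝ × ℝ => travelingWave W k c p.1 p.2.1 p.2.2) :=
  hW.comp (by fun_prop : ContDiff ℝ n fun p : ℝ × ℝ × ℝ => (p.1 + k * p.2.2 + c, p.2.1))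

end travelingWave

theorem stmt_15_general (r σ η a α μ δ ρ κ : ℝ) (ha : 0 < a) (hr : r ≠ 0)
    (W : ℝ → ℝ → ℝ) (hWC : ContDiff ℝ 2 (fun p : ℝ × ℝ => W p.1 p.2))
    (hWz : ∀ z h : ℝ, 0 < qdz W z h) (hWzz : ∀ z h : ℝ, qdzz W z h < 0)
    (hW : ∀ z h : ℝ,
      (1/2) * η^2 * h^2 * qdhh W z h + (μ - δ) * h * qdh W z h
        + (r * z + δ * h) * qdz W z h
        + (1/a) * qdz W z h * Real.log (qdz W z h)
        - ((α - r)^2 * (qdz W z h)^2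
            + 2 * (α - r) * η * ρ * h * qdz W z h * qdzh W z h
            + η^2 * ρ^2 * σ^2 * h^2 * (qdzh W z h)^2) / (2 * σ^2 * qdzz W z h)
        = 0) :
    SolvesEXPn r σ η a α μ δ ρ (fun t => Real.exp (-(κ * t)))
      (fun l h t =>
        W (l + κ * t / (a * r) + (1/(a * r)) * (κ/r - 1 - Real.log a)) h) := by
  set c := (1/(a * r)) * (κ/r - 1 - Real.log a)
  have hV : (fun l h t => W (l + κ * t / (a * r) + c) h) = travelingWave W (κ / (a * r)) c := by
    simp only [mul_div_right_comm]
    rfl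
  rw [hV]
  refine ⟨contDiff_travelingWave W _ c hWC, fun l h t => ?_, fun l h t => ?_, fun l h t => ?_⟩
  · rw [pdl_travelingWave]
    exact hWz _ h
  · rw [pdll_travelingWave]
    exact hWzz _ h
  set z := l + κ / (a * r) * t + c
  have hrz : r * z = r * l + κ / a * t + κ / (a * r) - 1 / a - Real.log a / a := by
    simp only [z, c]
    field_simp
    ring
  rw [pdt_travelingWave, pdl_travelingWave, pdh_travelingWave, pdll_travelingWave,
    pdlh_travelingWave, pdhh_travelingWave, Real.log_exp]
  linear_combination hW z h - qdz W z h * hrz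

/-- (invariant reduction for the subalgebra `h₂ = ⟨e₃⟩`,
exponential liquidation time `Φ̄(t) = e^{−κt}`). If `W(z,h)` is C² with
`W_z > 0`, `W_{zz} < 0`, and solves
`(1/2)η²h²W_{hh} + (μ−δ)hW_h + (rz+δh)W_z + (1/a)W_z ln W_z
 − ((α−r)²W_z² + 2(α−r)ηρh W_z W_{zh} + η²ρ²σ²h²W_{zh}²)/(2σ²W_{zz}) = 0`,
then `V(l,h,t) = W(l + κt/(ar) + (1/(ar))(κ/r − 1 − ln a), h)` solves the
EXPn–HJB equation. -/
theorem stmt_15 (r σ η a α μ δ ρ κ : ℝ) (hσ : 0 < σ) (ha : 0 < a) (hr : r ≠ 0)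
    (hκ : 0 < κ)
    (W : ℝ → ℝ → ℝ) (hWC : ContDiff ℝ 2 (fun p : ℝ × ℝ => W p.1 p.2))
    (hWz : ∀ z h : ℝ, 0 < qdz W z h) (hWzz : ∀ z h : ℝ, qdzz W z h < 0)
    (hW : ∀ z h : ℝ,
      (1/2) * η^2 * h^2 * qdhh W z h + (μ - δ) * h * qdh W z h
        + (r * z + δ * h) * qdz W z h
        + (1/a) * qdz W z h * Real.log (qdz W z h)
        - ((α - r)^2 * (qdz W z h)^2
            + 2 * (α - r) * η * ρ * h * qdz W z h * qdzh W z h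
            + η^2 * ρ^2 * σ^2 * h^2 * (qdzh W z h)^2) / (2 * σ^2 * qdzz W z h)
        = 0) :
    SolvesEXPn r σ η a α μ δ ρ (fun t => Real.exp (-(κ * t)))
      (fun l h t =>
        W (l + κ * t / (a * r) + (1/(a * r)) * (κ/r - 1 - Real.log a)) h) :=
  stmt_15_general r σ η a α μ δ ρ κ ha hr W hWC hWz hWzz hW
end

section
/- Assume r ≠ 0, a > 0, κ > 0, ω ≠ 0 and Φ̄(t) = e^{−κ t}. Let W = W(z,h) : ℝ² → ℝ be a C² function with W_z > 0 and W_{zz} < 0 everywhere, satisfying at every point the two dimensional PDE (1/2)η²h²W_{hh} + (μ−δ)h W_h + (r z + δ h)W_z + (1/a)W_z ln W_z − ((α−r)²W_z² + 2(α−r)ηρh W_z W_{zh} + η²ρ²σ²h²W_{zh}²)/(2σ²W_{zz}) − (1/a)(1/ω + 1 + ln a)W_z − (r/ω)W = 0. Then V(l,h,t) := e^{−r t/ω}·W(l + ((κ ω − r)/(a r ω))·t + κ/(a r²), h) solves the EXPn–HJB equation. (This is the invariant reduction corresponding to the subalgebra h₄ = ⟨e₁ + ω e₃⟩, ω ≠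 0; it is the unique symmetry reduction of the main HJB equation consistent with the boundary condition of the optimization problem.) -/
/-!
Along the symmetry `e₁ + ω e₃` the value function factors as `V = e^{-rt/ω} W(l + ct + d, h)`.
Every `l`/`h` derivative of `V` is `e^{-rt/ω}` times the corresponding derivative of `W`, the
Hamiltonian quotient is homogeneous of degree one in `(V_l, V_{lh}, V_{ll})`, and
`ln V_l = -rt/ω + ln W_z`. Hence the HJB operator applied to `V` is `e^{-rt/ω}` times the
reduced operator applied to `W`, up to a multiple of `W_z` whose coefficient vanishes
identically in `t` for the chosen `c = (κω - r)/(arω)` and `d = κ/(ar²)`.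
-/

open Real

def scaledShift (φ : ℝ → ℝ) (c d : ℝ) (W : ℝ → ℝ → ℝ) : ℝ → ℝ → ℝ → ℝ :=
  fun l h t => φ t * W (l + c * t + d) h

section ScaledShift

variable (φ : ℝ → ℝ) (c d : ℝ) (W : ℝ → ℝ → ℝ)

theorem pdl_scaledShift : pdl (scaledShift φ c d W) = scaledShift φ c d (qdz W) := by
  funext l h t
  simp only [pdl, qdz, scaledShift, add_assoc]
  rw [deriv_const_mul_field, deriv_comp_add_const (fun x => W x h)]

theorem pdh_scaledShift : pdh (scaledShift φ c d W) = scaledShift φ c d (qdh W) := by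
  funext l h t
  simp only [pdh, qdh, scaledShift]
  rw [deriv_const_mul_field]

-- The second partials are iterated first partials, e.g. `pdll V = pdl (pdl V)` definitionally.
theorem pdll_scaledShift : pdll (scaledShift φ c d W) = scaledShift φ c d (qdzz W) := by
  change pdl (pdl _) = _
  rw [pdl_scaledShift, pdl_scaledShift]
  rfl

theorem pdhh_scaledShift : pdhh (scaledShift φ c d W) = scaledShift φ c d (qdhh W) := by
  change pdh (pdh _) = _
  rw [pdh_scaledShift, pdh_scaledShift]
  rfl

theorem pdlh_scaledShift : pdlh (scaledShift φ c d W) = scaledShift φ c d (qdzh W) := by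
  change pdh (pdl _) = _
  rw [pdl_scaledShift, pdh_scaledShift]
  rfl

variable {φ c d W}

theorem pdt_scaledShift {φ' l h t : ℝ} (hφ : HasDerivAt φ φ' t)
    (hW : DifferentiableAt ℝ (fun x => W x h) (l + c * t + d)) :
    pdt (scaledShift φ c d W) l h t
      = φ' * W (l + c * t + d) h + φ t * (c * qdz W (l + c * t + d) h) := by
  have hshift : HasDerivAt (fun s => l + c * s + d) c t := by
    simpa using (((hasDerivAt_id t).const_mul c).const_add l).add_const d
  have hWt : HasDerivAt (fun s => W (l + c * s + d) h) (qdz W (l + c * t + d) h * c) t :=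
    HasDerivAt.comp (h₂ := fun x => W x h) t hW.hasDerivAt hshift
  exact (hφ.mul hWt).deriv.trans (by ring)

theorem contDiff_scaledShift {n : WithTop ℕ∞} (hφ : ContDiff ℝ n φ)
    (hW : ContDiff ℝ n (fun p : ℝ × ℝ => W p.1 p.2)) :
    ContDiff ℝ n (fun p : ℝ × ℝ × ℝ => scaledShift φ c d W p.1 p.2.1 p.2.2) :=
  (hφ.comp (by fun_prop)).mul
    (hW.comp (f := fun p : ℝ × ℝ × ℝ => (p.1 + c * p.2.2 + d, p.2.1)) (by fun_prop))

end ScaledShift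

theorem hamiltonian_quotient_mul {𝕜 : Type*} [Field 𝕜] {e : 𝕜} (he : e ≠ 0) (A B C D p q y : 𝕜) :
    (A * (e * p) ^ 2 + B * (e * p) * (e * q) + C * (e * q) ^ 2) / (D * (e * y))
      = e * ((A * p ^ 2 + B * p * q + C * q ^ 2) / (D * y)) := by
  rw [show A * (e * p) ^ 2 + B * (e * p) * (e * q) + C * (e * q) ^ 2
      = e * (e * (A * p ^ 2 + B * p * q + C * q ^ 2)) by ring,
    show D * (e * y) = e * (D * y) by ring, mul_div_mul_left _ _ he, mul_div_assoc]

theorem reduction_coefficient_eq_zero {r a κ ω c d : ℝ} (hr : r ≠ 0) (ha : a ≠ 0) (hω : ω ≠ 0)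
    (hc : c = (κ * ω - r) / (a * r * ω)) (hd : d = κ / (a * r ^ 2)) (t : ℝ) :
    c - r * (c * t) - r * d - (1 / a) * (r * t / ω) - (1 / a) * (1 + -(κ * t))
      - log a / a + (1 / a) * (1 / ω + 1 + log a) = 0 := by
  subst hc hd
  field_simp
  ring

theorem stmt_16_general (r σ η a α μ δ ρ κ ω : ℝ) (ha : 0 < a) (hr : r ≠ 0) (hω : ω ≠ 0)
    (W : ℝ → ℝ → ℝ) (hWC : ContDiff ℝ 2 (fun p : ℝ × ℝ => W p.1 p.2))
    (hWz : ∀ z h : ℝ, 0 < qdz W z h) (hWzz : ∀ z h : ℝ, qdzz W z h < 0)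
    (hW : ∀ z h : ℝ,
      (1/2) * η^2 * h^2 * qdhh W z h + (μ - δ) * h * qdh W z h
        + (r * z + δ * h) * qdz W z h
        + (1/a) * qdz W z h * Real.log (qdz W z h)
        - ((α - r)^2 * (qdz W z h)^2
            + 2 * (α - r) * η * ρ * h * qdz W z h * qdzh W z h
            + η^2 * ρ^2 * σ^2 * h^2 * (qdzh W z h)^2) / (2 * σ^2 * qdzz W z h)
        - (1/a) * (1/ω + 1 + Real.log a) * qdz W z h
        - (r/ω) * W z h = 0) :
    SolvesEXPn r σ η a α μ δ ρ (fun t => Real.exp (-(κ * t)))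
      (fun l h t =>
        Real.exp (-(r * t / ω)) *
          W (l + ((κ * ω - r)/(a * r * ω)) * t + κ/(a * r^2)) h) := by
  set c := (κ * ω - r) / (a * r * ω)
  set d := κ / (a * r ^ 2)
  change SolvesEXPn r σ η a α μ δ ρ (fun t => exp (-(κ * t)))
    (scaledShift (fun t => exp (-(r * t / ω))) c d W)
  have hE : ∀ t, HasDerivAt (fun t => exp (-(r * t / ω))) (exp (-(r * t / ω)) * -(r / ω)) t :=
    fun t => by simpa using ((((hasDerivAt_id t).const_mul r).div_const ω).neg).exp
  have hWdiff : ∀ z h, DifferentiableAt ℝ (fun x => W x h) z := fun z h =>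
    (hWC.comp (contDiff_id.prodMk contDiff_const)).differentiable (by norm_num) z
  refine ⟨contDiff_scaledShift (by fun_prop) hWC, fun l h t => ?_, fun l h t => ?_,
    fun l h t => ?_⟩
  · rw [pdl_scaledShift]
    exact mul_pos (exp_pos _) (hWz _ _)
  · rw [pdll_scaledShift]
    exact mul_neg_of_pos_of_neg (exp_pos _) (hWzz _ _)
  · rw [pdt_scaledShift (hE t) (hWdiff _ _), pdl_scaledShift, pdh_scaledShift,
      pdll_scaledShift, pdhh_scaledShift, pdlh_scaledShift]
    simp only [scaledShift]
    rw [hamiltonian_quotient_mul (exp_pos _).ne', log_mul (exp_pos _).ne' (hWz _ _).ne',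
      log_exp, log_exp]
    have hcoeff := reduction_coefficient_eq_zero (c := c) (d := d) hr ha.ne' hω rfl rfl t
    linear_combination exp (-(r * t / ω)) * hW (l + c * t + d) h
      + exp (-(r * t / ω)) * qdz W (l + c * t + d) h * hcoeff

/-- (invariant reduction for the subalgebra `h₄ = ⟨e₁ + ω e₃⟩`,
`ω ≠ 0`, exponential liquidation time `Φ̄(t) = e^{−κt}`; the unique symmetry
reduction consistent with the boundary condition). If `W(z,h)` is C² with
`W_z > 0`, `W_{zz} < 0`, and solves
`(1/2)η²h²W_{hh} + (μ−δ)hW_h + (rz+δh)W_z + (1/a)W_z ln W_z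
 − ((α−r)²W_z² + 2(α−r)ηρh W_z W_{zh} + η²ρ²σ²h²W_{zh}²)/(2σ²W_{zz})
 − (1/a)(1/ω + 1 + ln a)W_z − (r/ω)W = 0`,
then `V(l,h,t) = e^{−rt/ω}·W(l + ((κω−r)/(arω))t + κ/(ar²), h)` solves the
EXPn–HJB equation. -/
theorem stmt_16 (r σ η a α μ δ ρ κ ω : ℝ) (hσ : 0 < σ) (ha : 0 < a) (hr : r ≠ 0)
    (hκ : 0 < κ) (hω : ω ≠ 0)
    (W : ℝ → ℝ → ℝ) (hWC : ContDiff ℝ 2 (fun p : ℝ × ℝ => W p.1 p.2))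
    (hWz : ∀ z h : ℝ, 0 < qdz W z h) (hWzz : ∀ z h : ℝ, qdzz W z h < 0)
    (hW : ∀ z h : ℝ,
      (1/2) * η^2 * h^2 * qdhh W z h + (μ - δ) * h * qdh W z h
        + (r * z + δ * h) * qdz W z h
        + (1/a) * qdz W z h * Real.log (qdz W z h)
        - ((α - r)^2 * (qdz W z h)^2
            + 2 * (α - r) * η * ρ * h * qdz W z h * qdzh W z h
            + η^2 * ρ^2 * σ^2 * h^2 * (qdzh W z h)^2) / (2 * σ^2 * qdzz W z h)
        - (1/a) * (1/ω + 1 + Real.log a) * qdz W z h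
        - (r/ω) * W z h = 0) :
    SolvesEXPn r σ η a α μ δ ρ (fun t => Real.exp (-(κ * t)))
      (fun l h t =>
        Real.exp (-(r * t / ω)) *
          W (l + ((κ * ω - r)/(a * r * ω)) * t + κ/(a * r^2)) h) :=
  stmt_16_general r σ η a α μ δ ρ κ ω ha hr hω W hWC hWz hWzz hW
end

section
/- Assume r ≠ 0, a > 0, κ > 0, Φ̄(t) = e^{−κ t}, and fix ε ∈ {1, −1}. Let W = W(z,h) : ℝ² → ℝ be a C² function with W_z > 0 and W_{zz} < 0 everywhere, satisfying at every point the two dimensional PDE (1/2)η²h²W_{hh} + (μ−δ)h W_h + (r z + δ h)W_z + (1/a)W_z ln W_z − ((α−r)²W_z² + 2(α−r)ηρh W_z W_{zh} + η²ρ²σ²h²W_{zh}²)/(2σ²W_{zz}) − (1/a)(1 + ln a)W_z + ε r = 0. Then V(l,h,t) := W(l + κ t/(a r) + κ/(a r²), h) + ε r t solves the EXPn–HJB equation. (This is the invariant reduction corresponding to the subalgebra h₇ = ⟨e₂ ± e₃⟩.) -/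
/-!
For `V(l,h,t) = W(l + s t, h) + f t` every `l`- and `h`-derivative of `V` is the corresponding
derivative of `W` at the shifted point, while `V_t = s' W_z + f'`. With
`s t = κt/(ar) + κ/(ar²)`, the drift `r l V_l` differs from `r z W_z` by `(κt/a + κ/(ar)) W_z`,
which is exactly what `V_t` and the term `−(1/a) ln Φ̄(t) V_l = (κt/a) V_l` supply; `f t = εrt`
provides the constant `εr`.
-/

def shiftedLift (W : ℝ → ℝ → ℝ) (s f : ℝ → ℝ) : ℝ → ℝ → ℝ → ℝ :=
  fun l h t => W (l + s t) h + f t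

section shiftedLift

variable (W : ℝ → ℝ → ℝ) (s f : ℝ → ℝ)

theorem pdl_shiftedLift (l h t : ℝ) : pdl (shiftedLift W s f) l h t = qdz W (l + s t) h := by
  simp only [pdl, qdz, shiftedLift, deriv_add_const]
  exact deriv_comp_add_const (fun x => W x h) (s t) l

theorem pdh_shiftedLift (l h t : ℝ) : pdh (shiftedLift W s f) l h t = qdh W (l + s t) h := by
  simp only [pdh, qdh, shiftedLift, deriv_add_const]

theorem pdll_shiftedLift (l h t : ℝ) : pdll (shiftedLift W s f) l h t = qdzz W (l + s t) h := by
  simp only [pdll, qdzz, pdl_shiftedLift]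
  exact deriv_comp_add_const (fun x => qdz W x h) (s t) l

theorem pdhh_shiftedLift (l h t : ℝ) : pdhh (shiftedLift W s f) l h t = qdhh W (l + s t) h := by
  simp only [pdhh, qdhh, pdh_shiftedLift]

theorem pdlh_shiftedLift (l h t : ℝ) : pdlh (shiftedLift W s f) l h t = qdzh W (l + s t) h := by
  simp only [pdlh, qdzh, pdl_shiftedLift]

theorem pdt_shiftedLift {l h t s' f' : ℝ}
    (hW : DifferentiableAt ℝ (fun z => W z h) (l + s t))
    (hs : HasDerivAt s s' t) (hf : HasDerivAt f f' t) :
    pdt (shiftedLift W s f) l h t = qdz W (l + s t) h * s' + f' := by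
  exact ((hW.hasDerivAt.comp t (hs.const_add l)).add hf).deriv

theorem contDiff_shiftedLift {n : WithTop ℕ∞} (hW : ContDiff ℝ n (fun p : ℝ × ℝ => W p.1 p.2))
    (hs : ContDiff ℝ n s) (hf : ContDiff ℝ n f) :
    ContDiff ℝ n (fun p : ℝ × ℝ × ℝ => shiftedLift W s f p.1 p.2.1 p.2.2) :=
  (hW.comp ((contDiff_fst.add (hs.comp contDiff_snd.snd)).prodMk contDiff_snd.fst)).add
    (hf.comp contDiff_snd.snd)

end shiftedLift

theorem stmt_17_general (r σ η a α μ δ ρ κ ε : ℝ) (hr : r ≠ 0)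
    (W : ℝ → ℝ → ℝ) (hWC : ContDiff ℝ 2 (fun p : ℝ × ℝ => W p.1 p.2))
    (hWz : ∀ z h : ℝ, 0 < qdz W z h) (hWzz : ∀ z h : ℝ, qdzz W z h < 0)
    (hW : ∀ z h : ℝ,
      (1/2) * η^2 * h^2 * qdhh W z h + (μ - δ) * h * qdh W z h
        + (r * z + δ * h) * qdz W z h
        + (1/a) * qdz W z h * Real.log (qdz W z h)
        - ((α - r)^2 * (qdz W z h)^2
            + 2 * (α - r) * η * ρ * h * qdz W z h * qdzh W z h
            + η^2 * ρ^2 * σ^2 * h^2 * (qdzh W z h)^2) / (2 * σ^2 * qdzz W z h)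
        - (1/a) * (1 + Real.log a) * qdz W z h + ε * r = 0) :
    SolvesEXPn r σ η a α μ δ ρ (fun t => Real.exp (-(κ * t)))
      (fun l h t =>
        W (l + κ * t / (a * r) + κ/(a * r^2)) h + ε * r * t) := by
  set s : ℝ → ℝ := fun t => κ * t / (a * r) + κ / (a * r^2)
  have hV : (fun l h t => W (l + κ * t / (a * r) + κ/(a * r^2)) h + ε * r * t)
      = shiftedLift W s (fun t => ε * r * t) := by
    simp only [s, add_assoc]; rfl
  have hs (t : ℝ) : HasDerivAt s (κ / (a * r)) t := by
    have := (((hasDerivAt_id t).const_mul κ).div_const (a * r)).add_const (κ / (a * r ^ 2))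
    rwa [mul_one] at this
  have hf (t : ℝ) : HasDerivAt (fun t => ε * r * t) (ε * r) t := by
    simpa using (hasDerivAt_id t).const_mul (ε * r)
  have hWdiff (h : ℝ) : Differentiable ℝ (fun z => W z h) :=
    (hWC.differentiable two_ne_zero).comp (differentiable_id.prodMk (differentiable_const h))
  rw [hV]
  refine ⟨contDiff_shiftedLift W s _ hWC (by fun_prop) (by fun_prop), fun l h t => ?_,
    fun l h t => ?_, fun l h t => ?_⟩
  · simpa only [pdl_shiftedLift] using hWz _ _
  · simpa only [pdll_shiftedLift] using hWzz _ _
  · rw [pdt_shiftedLift W s _ (hWdiff h _) (hs t) (hf t), pdl_shiftedLift, pdh_shiftedLift,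
      pdll_shiftedLift, pdhh_shiftedLift, pdlh_shiftedLift, Real.log_exp]
    have hrs : r * (κ * t / (a * r) + κ / (a * r ^ 2)) = κ * t / a + κ / (a * r) := by
      field_simp
    linear_combination hW (l + s t) h - qdz W (l + s t) h * hrs

/-- (invariant reduction for the subalgebra `h₇ = ⟨e₂ ± e₃⟩`,
exponential liquidation time `Φ̄(t) = e^{−κt}`, `ε ∈ {1,−1}`). If `W(z,h)` is C²
with `W_z > 0`, `W_{zz} < 0`, and solves
`(1/2)η²h²W_{hh} + (μ−δ)hW_h + (rz+δh)W_z + (1/a)W_z ln W_z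
 − ((α−r)²W_z² + 2(α−r)ηρh W_z W_{zh} + η²ρ²σ²h²W_{zh}²)/(2σ²W_{zz})
 − (1/a)(1 + ln a)W_z + εr = 0`,
then `V(l,h,t) = W(l + κt/(ar) + κ/(ar²), h) + εrt` solves the EXPn–HJB
equation. -/
theorem stmt_17 (r σ η a α μ δ ρ κ ε : ℝ) (hσ : 0 < σ) (ha : 0 < a) (hr : r ≠ 0)
    (hκ : 0 < κ) (hε : ε = 1 ∨ ε = -1)
    (W : ℝ → ℝ → ℝ) (hWC : ContDiff ℝ 2 (fun p : ℝ × ℝ => W p.1 p.2))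
    (hWz : ∀ z h : ℝ, 0 < qdz W z h) (hWzz : ∀ z h : ℝ, qdzz W z h < 0)
    (hW : ∀ z h : ℝ,
      (1/2) * η^2 * h^2 * qdhh W z h + (μ - δ) * h * qdh W z h
        + (r * z + δ * h) * qdz W z h
        + (1/a) * qdz W z h * Real.log (qdz W z h)
        - ((α - r)^2 * (qdz W z h)^2
            + 2 * (α - r) * η * ρ * h * qdz W z h * qdzh W z h
            + η^2 * ρ^2 * σ^2 * h^2 * (qdzh W z h)^2) / (2 * σ^2 * qdzz W z h)
        - (1/a) * (1 + Real.log a) * qdz W z h + ε * r = 0) :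
    SolvesEXPn r σ η a α μ δ ρ (fun t => Real.exp (-(κ * t)))
      (fun l h t =>
        W (l + κ * t / (a * r) + κ/(a * r^2)) h + ε * r * t) :=
  stmt_17_general r σ η a α μ δ ρ κ ε hr W hWC hWz hWzz hW
end

section
/- Assume r > 0, a > 0, κ > 0 and Φ̄(t) = e^{−κ t}. Let v : ℝ → ℝ be a C² function with v(h) < 0 for all h, satisfying at every point h the ordinary differential equation (1/2)η²h²v''(h) − (η²ρ²/2)h²(v'(h))²/v(h) + (((μ−δ)σ² − (α−r)ηρ)/σ²)·h v'(h) − (a r δ h + (α−r)²/(2σ²))·v(h) − r·v(h)·ln(−a r v(h)) = 0. Then V(l,h,t) := v(h)·e^{−a r z}, where z = l + κ t/(a r) + (1/(a r))(κ/r − 1 − ln a), solves the EXPn–HJB equation. (This is the reduction to an ODE corresponding to the two dimensional subalgebra h₈ = ⟨e₁, e₃⟩.) -/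
/-!
With `V = v(h) e^{A l + B t + C}` every partial derivative is `e^{A l + B t + C}` times a
derivative of `v`, and `ln V_l` is `ln(A v(h)) + A l + B t + C`. For `A = -ar`, `B = -κ` and
`C = 1 + ln a - κ/r` the HJB residual is therefore `e^{A l + B t + C}` times the residual of the
ODE, while `V_l = -ar V > 0` and `V_ll = (ar)² V < 0` because `v < 0`.
-/

noncomputable def expAnsatz (v : ℝ → ℝ) (A B C : ℝ) (l h t : ℝ) : ℝ :=
  v h * Real.exp (A * l + B * t + C)

section ExpAnsatz

variable (v : ℝ → ℝ) (A B C : ℝ)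

theorem contDiff_expAnsatz {n : WithTop ℕ∞} (hv : ContDiff ℝ n v) :
    ContDiff ℝ n (fun p : ℝ × ℝ × ℝ => expAnsatz v A B C p.1 p.2.1 p.2.2) := by
  unfold expAnsatz
  fun_prop

theorem hasDerivAt_expAnsatz_l (l h t : ℝ) :
    HasDerivAt (fun x => expAnsatz v A B C x h t) (A * expAnsatz v A B C l h t) l := by
  have hlin : HasDerivAt (fun x => A * x + B * t + C) A l := by
    simpa using ((hasDerivAt_id l).const_mul A).add_const (B * t + C)
  unfold expAnsatz
  exact (hlin.exp.const_mul (v h)).congr_deriv (by ring)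

theorem hasDerivAt_expAnsatz_t (l h t : ℝ) :
    HasDerivAt (fun s => expAnsatz v A B C l h s) (B * expAnsatz v A B C l h t) t := by
  have hlin : HasDerivAt (fun s => A * l + B * s + C) B t := by
    simpa using ((hasDerivAt_id t).const_mul B).const_add (A * l) |>.add_const C
  unfold expAnsatz
  exact (hlin.exp.const_mul (v h)).congr_deriv (by ring)

theorem expAnsatz_neg {l h t : ℝ} (hv : v h < 0) : expAnsatz v A B C l h t < 0 :=
  mul_neg_of_neg_of_pos hv (Real.exp_pos _)

theorem pdl_expAnsatz (l h t : ℝ) :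
    pdl (expAnsatz v A B C) l h t = A * expAnsatz v A B C l h t :=
  (hasDerivAt_expAnsatz_l v A B C l h t).deriv

theorem pdt_expAnsatz (l h t : ℝ) :
    pdt (expAnsatz v A B C) l h t = B * expAnsatz v A B C l h t :=
  (hasDerivAt_expAnsatz_t v A B C l h t).deriv

theorem pdll_expAnsatz (l h t : ℝ) :
    pdll (expAnsatz v A B C) l h t = A ^ 2 * expAnsatz v A B C l h t := by
  have hpdl :
      (fun x => pdl (expAnsatz v A B C) x h t) = fun x => A * expAnsatz v A B C x h t :=
    funext fun x => pdl_expAnsatz v A B C x h t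
  rw [pdll, hpdl, ((hasDerivAt_expAnsatz_l v A B C l h t).const_mul A).deriv]
  ring

theorem pdh_expAnsatz {h : ℝ} (hv : DifferentiableAt ℝ v h) (l t : ℝ) :
    pdh (expAnsatz v A B C) l h t = deriv v h * Real.exp (A * l + B * t + C) :=
  deriv_mul_const hv _

theorem pdhh_expAnsatz (hv : Differentiable ℝ v) {h : ℝ}
    (hv' : DifferentiableAt ℝ (deriv v) h) (l t : ℝ) :
    pdhh (expAnsatz v A B C) l h t = deriv (deriv v) h * Real.exp (A * l + B * t + C) := by
  have hpdh : (fun y => pdh (expAnsatz v A B C) l y t)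
      = fun y => deriv v y * Real.exp (A * l + B * t + C) :=
    funext fun y => pdh_expAnsatz v A B C (hv y) l t
  rw [pdhh, hpdh, deriv_mul_const hv']

theorem pdlh_expAnsatz {h : ℝ} (hv : DifferentiableAt ℝ v h) (l t : ℝ) :
    pdlh (expAnsatz v A B C) l h t = A * deriv v h * Real.exp (A * l + B * t + C) := by
  have hpdl : (fun y => pdl (expAnsatz v A B C) l y t)
      = fun y => v y * (A * Real.exp (A * l + B * t + C)) := by
    funext y
    rw [pdl_expAnsatz, expAnsatz]
    ring
  rw [pdlh, hpdl, deriv_mul_const hv]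
  ring

end ExpAnsatz

theorem stmt_18_general (r σ η a α μ δ ρ κ : ℝ) (hσ : 0 < σ) (ha : 0 < a) (hr : 0 < r)
    (v : ℝ → ℝ) (hvC : ContDiff ℝ 2 v) (hvneg : ∀ h : ℝ, v h < 0)
    (hv : ∀ h : ℝ,
      (1/2) * η^2 * h^2 * deriv (deriv v) h
        - (η^2 * ρ^2 / 2) * h^2 * (deriv v h)^2 / v h
        + (((μ - δ) * σ^2 - (α - r) * η * ρ) / σ^2) * h * deriv v h
        - (a * r * δ * h + (α - r)^2 / (2 * σ^2)) * v h
        - r * v h * Real.log (-(a * r * v h)) = 0) :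
    SolvesEXPn r σ η a α μ δ ρ (fun t => Real.exp (-(κ * t)))
      (fun l h t =>
        v h * Real.exp (-(a * r *
          (l + κ * t / (a * r) + (1/(a * r)) * (κ/r - 1 - Real.log a))))) := by
  have har : 0 < a * r := mul_pos ha hr
  have hV : (fun l h t => v h * Real.exp (-(a * r *
      (l + κ * t / (a * r) + (1/(a * r)) * (κ/r - 1 - Real.log a)))))
      = expAnsatz v (-(a * r)) (-κ) (1 + Real.log a - κ / r) := by
    funext l h t
    rw [expAnsatz]
    field_simp
    ring_nf
  have hvd : Differentiable ℝ v := hvC.differentiable (by norm_num)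
  have hvd' : Differentiable ℝ (deriv v) := hvC.differentiable_deriv_two
  rw [hV]
  refine ⟨contDiff_expAnsatz v _ _ _ hvC, fun l h t => ?_, fun l h t => ?_, fun l h t => ?_⟩
  · rw [pdl_expAnsatz]
    exact mul_pos_of_neg_of_neg (neg_neg_of_pos har) (expAnsatz_neg v _ _ _ (hvneg h))
  · rw [pdll_expAnsatz]
    exact mul_neg_of_pos_of_neg (by rw [neg_sq]; positivity) (expAnsatz_neg v _ _ _ (hvneg h))
  · rw [pdt_expAnsatz, pdhh_expAnsatz v _ _ _ hvd (hvd' h), pdl_expAnsatz,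
      pdh_expAnsatz v _ _ _ (hvd h), pdlh_expAnsatz v _ _ _ (hvd h), pdll_expAnsatz, expAnsatz,
      Real.log_exp]
    set E := Real.exp (-(a * r) * l + -κ * t + (1 + Real.log a - κ / r))
    have hE : 0 < E := Real.exp_pos _
    have hvar : 0 < -(a * r * v h) := neg_pos.mpr (mul_neg_of_pos_of_neg har (hvneg h))
    rw [show -(a * r) * (v h * E) = -(a * r * v h) * E by ring, Real.log_mul hvar.ne' hE.ne',
      Real.log_exp]
    have hv0 := (hvneg h).ne
    -- The `l`-terms of `r l V_l` and `V_l ln V_l` cancel, and `C = 1 + ln a - κ/r` is chosen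
    -- so that the `t`-terms and constants cancel too; what remains is `E` times the ODE.
    have hode := hv h
    field_simp at hode ⊢
    linear_combination E * hode

/-- (reduction to an ODE for the two dimensional subalgebra
`h₈ = ⟨e₁, e₃⟩`, exponential liquidation time `Φ̄(t) = e^{−κt}`, `r > 0`). If
`v : ℝ → ℝ` is C² with `v < 0` and solves
`(1/2)η²h²v'' − (η²ρ²/2)h²(v')²/v + (((μ−δ)σ² − (α−r)ηρ)/σ²)hv'
 − (arδh + (α−r)²/(2σ²))v − rv ln(−arv) = 0`,
then `V(l,h,t) = v(h)·e^{−arz}` with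
`z = l + κt/(ar) + (1/(ar))(κ/r − 1 − ln a)` solves the EXPn–HJB equation. -/
theorem stmt_18 (r σ η a α μ δ ρ κ : ℝ) (hσ : 0 < σ) (ha : 0 < a) (hr : 0 < r)
    (hκ : 0 < κ)
    (v : ℝ → ℝ) (hvC : ContDiff ℝ 2 v) (hvneg : ∀ h : ℝ, v h < 0)
    (hv : ∀ h : ℝ,
      (1/2) * η^2 * h^2 * deriv (deriv v) h
        - (η^2 * ρ^2 / 2) * h^2 * (deriv v h)^2 / v h
        + (((μ - δ) * σ^2 - (α - r) * η * ρ) / σ^2) * h * deriv v h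
        - (a * r * δ * h + (α - r)^2 / (2 * σ^2)) * v h
        - r * v h * Real.log (-(a * r * v h)) = 0) :
    SolvesEXPn r σ η a α μ δ ρ (fun t => Real.exp (-(κ * t)))
      (fun l h t =>
        v h * Real.exp (-(a * r *
          (l + κ * t / (a * r) + (1/(a * r)) * (κ/r - 1 - Real.log a))))) :=
  stmt_18_general r σ η a α μ δ ρ κ hσ ha hr v hvC hvneg hv
end
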